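/- Suppose the Markov kernel P satisfies the weak drift condition PV ≤ V + b·1_C with b < ∞ and C = {x : V(x) ≤ d} a sublevel set, and suppose that for constants d' ≥ d, λ > 0, δ ∈ [0,1), β ∈ (0,1), b' < ∞ with log β < δ^{-1}·log(1−δ), the taming function F(z) = ⌈λz^δ⌉ for z > d', F(z) = 1 for z ≤ d', yields an F-subsampled kernel of P satisfying Q_F V ≤ βV + b'·1_{[V ≤ d']}. Let P̂ be another Markov kernel on 𝒳 with P̂(x,·) = P(x,·) for all x ∉ C, satisfying P̂V ≤ V + b̂·1_C for some b̂ < ∞. Then a taming function of the same form with the same λ and δ works for P̂: for every β̂ ∈ (β,1) there exist d̂ ≥ d' and b̂' < ∞ such that, with F̂(z) = ⌈λz^δ⌉ for z > d̂ and F̂(z) = 1 for z ≤ d̂, the F̂-subsampled kernel of P̂ satisfies Q_{F̂} V ≤ β̂·V + b̂'·1_{[V ≤ d̂]}. In particular, if every sublevel set of V is small for P̂ and β̂ is chosen with log β̂ < δ^{-1}·log(1−δ), then P̂ is tame with respect to V. -/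

import Mathlib

/-!
Off `C` the kernels `P̂` and `P` agree, so the two chains started at `x` move alike until they
first enter `C`; from then on the weak drift of `P̂` lets `V` grow by at most `b̂` per step.
Hence `P̂ⁿV(x) ≤ PⁿV(x) + sup_C V + n b̂`. For `n = ⌈λ V(x)^δ⌉` the excess is `O(V(x)^δ) = o(V(x))`
because `δ < 1`, so beyond a large threshold `d̂` it is absorbed by raising `β` to `β̂`; below
`d̂` a single step of the weak drift suffices.
-/

open MeasureTheory ProbabilityTheory ENNReal Set

/-- `n`-fold composition power of a kernel. -/
noncomputable def kpow {𝓧 : Type*} [MeasurableSpace 𝓧]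
    (P : ProbabilityTheory.Kernel 𝓧 𝓧) : ℕ → ProbabilityTheory.Kernel 𝓧 𝓧
  | 0 => ProbabilityTheory.Kernel.id
  | n + 1 => P.comp (kpow P n)

/-- The taming function `F(z) = ⌈λ z^δ⌉` for `z > d'` and `F(z) = 1` for `z ≤ d'`. -/
noncomputable def tamingF (lam δ d' : ℝ) (z : ℝ) : ℕ :=
  if z ≤ d' then 1 else ⌈lam * z ^ δ⌉₊

/-- The bound `δ⁻¹·log(1−δ)`, interpreted as `−1` when `δ = 0`. -/
noncomputable def tameBound (δ : ℝ) : ℝ :=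
  if δ = 0 then -1 else δ⁻¹ * Real.log (1 - δ)

/-- `C` is a small set for the kernel `P`: for some `m ≥ 1`, `ε ∈ (0,1]` and probability
measure `ν`, `P^m(x,E) ≥ ε·ν(E)` for all `x ∈ C` and measurable `E`. -/
def IsSmallSet {𝓧 : Type*} [MeasurableSpace 𝓧]
    (P : ProbabilityTheory.Kernel 𝓧 𝓧) (C : Set 𝓧) : Prop :=
  ∃ m : ℕ, 0 < m ∧ ∃ ε : ℝ, 0 < ε ∧ ε ≤ 1 ∧ ∃ ν : Measure 𝓧, IsProbabilityMeasure ν ∧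
    ∀ x ∈ C, ∀ E : Set 𝓧, MeasurableSet E → ENNReal.ofReal ε * ν E ≤ (kpow P m) x E

/-- The chain with kernel `P` is *tame* with respect to the scale function `V`. -/
def IsTame {𝓧 : Type*} [MeasurableSpace 𝓧]
    (P : ProbabilityTheory.Kernel 𝓧 𝓧) (V : 𝓧 → ℝ) : Prop :=
  ∃ d' : ℝ, 1 ≤ d' ∧ IsSmallSet P {x | V x ≤ d'} ∧
    ∃ lam : ℝ, 0 < lam ∧ ∃ δ ∈ Set.Ico (0 : ℝ) 1, ∃ β ∈ Set.Ioo (0 : ℝ) 1, ∃ b' : ℝ,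
      Real.log β < tameBound δ ∧
      ∀ x, ∫⁻ y, ENNReal.ofReal (V y) ∂((kpow P (tamingF lam δ d' (V x))) x)
        ≤ ENNReal.ofReal (β * V x + Set.indicator {x' | V x' ≤ d'} (fun _ => b') x)

section KernelPower

variable {𝓧 : Type*} [MeasurableSpace 𝓧]

instance isMarkovKernel_kpow (P : Kernel 𝓧 𝓧) [IsMarkovKernel P] (n : ℕ) :
    IsMarkovKernel (kpow P n) := by
  induction n with
  | zero => rw [kpow]; infer_instance
  | succ n ih => rw [kpow]; infer_instance

lemma kpow_zero (P : Kernel 𝓧 𝓧) : kpow P 0 = Kernel.id :=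
  rfl

lemma kpow_one (P : Kernel 𝓧 𝓧) : kpow P 1 = P :=
  Kernel.comp_id P

lemma kpow_succ' (P : Kernel 𝓧 𝓧) (n : ℕ) : kpow P (n + 1) = kpow P n ∘ₖ P := by
  induction n with
  | zero => exact (Kernel.comp_id P).trans (Kernel.id_comp P).symm
  | succ n ih =>
    show P ∘ₖ kpow P (n + 1) = (P ∘ₖ kpow P n) ∘ₖ P
    rw [ih, Kernel.comp_assoc]

end KernelPower

lemma tamingF_of_le {lam δ d z : ℝ} (hz : z ≤ d) : tamingF lam δ d z = 1 :=
  if_pos hz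

lemma tamingF_of_lt {lam δ d z : ℝ} (hz : d < z) : tamingF lam δ d z = ⌈lam * z ^ δ⌉₊ :=
  if_neg hz.not_ge

lemma lintegral_add_const_of_isProbabilityMeasure {α : Type*} [MeasurableSpace α]
    {μ : Measure α} [IsProbabilityMeasure μ] (f : α → ℝ≥0∞) (c : ℝ≥0∞) :
    ∫⁻ y, f y + c ∂μ = ∫⁻ y, f y ∂μ + c := by
  rw [lintegral_add_right _ measurable_const, lintegral_const, measure_univ, mul_one]

section Drift

variable {𝓧 : Type*} [MeasurableSpace 𝓧] {W : 𝓧 → ℝ≥0∞}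

lemma lintegral_kpow_le_add_mul (Q : Kernel 𝓧 𝓧) [IsMarkovKernel Q] (hW : Measurable W)
    {c : ℝ≥0∞} (hQ : ∀ x, ∫⁻ y, W y ∂Q x ≤ W x + c) (n : ℕ) (x : 𝓧) :
    ∫⁻ y, W y ∂kpow Q n x ≤ W x + n * c := by
  induction n with
  | zero => simp [kpow_zero, Kernel.lintegral_id' hW]
  | succ n ih =>
    calc ∫⁻ y, W y ∂kpow Q (n + 1) x = ∫⁻ z, ∫⁻ y, W y ∂Q z ∂kpow Q n x :=
          Kernel.lintegral_comp _ _ _ hW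
      _ ≤ ∫⁻ z, W z + c ∂kpow Q n x := lintegral_mono hQ
      _ = ∫⁻ z, W z ∂kpow Q n x + c := lintegral_add_const_of_isProbabilityMeasure _ _
      _ ≤ W x + n * c + c := by gcongr
      _ = W x + (n + 1 : ℕ) * c := by push_cast; ring

lemma lintegral_kpow_le_of_eqOn_compl (P Q : Kernel 𝓧 𝓧) [IsMarkovKernel P] [IsMarkovKernel Q]
    {C : Set 𝓧} (hPQ : EqOn Q P Cᶜ) (hW : Measurable W) {D c : ℝ≥0∞}
    (hWC : ∀ x ∈ C, W x ≤ D) (hQ : ∀ x, ∫⁻ y, W y ∂Q x ≤ W x + c) (n : ℕ) (x : 𝓧) :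
    ∫⁻ y, W y ∂kpow Q n x ≤ ∫⁻ y, W y ∂kpow P n x + (D + n * c) := by
  induction n generalizing x with
  | zero =>
    rw [kpow_zero, kpow_zero, Kernel.lintegral_id' hW]
    exact le_self_add
  | succ n ih =>
    by_cases hx : x ∈ C
    · calc ∫⁻ y, W y ∂kpow Q (n + 1) x ≤ W x + (n + 1 : ℕ) * c :=
            lintegral_kpow_le_add_mul Q hW hQ (n + 1) x
        _ ≤ D + (n + 1 : ℕ) * c := by gcongr; exact hWC x hx
        _ ≤ _ := le_add_self
    · calc ∫⁻ y, W y ∂kpow Q (n + 1) x = ∫⁻ z, ∫⁻ y, W y ∂kpow Q n z ∂P x := by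
            rw [kpow_succ', Kernel.lintegral_comp _ _ _ hW, hPQ hx]
        _ ≤ ∫⁻ z, ∫⁻ y, W y ∂kpow P n z + (D + n * c) ∂P x := lintegral_mono fun z => ih z
        _ = ∫⁻ y, W y ∂kpow P (n + 1) x + (D + n * c) := by
            rw [lintegral_add_const_of_isProbabilityMeasure, kpow_succ',
              Kernel.lintegral_comp _ _ _ hW]
        _ ≤ _ := by gcongr; exact_mod_cast n.le_succ

lemma lintegral_ofReal_kpow_le_of_eqOn_compl (P Q : Kernel 𝓧 𝓧) [IsMarkovKernel P]
    [IsMarkovKernel Q] {V : 𝓧 → ℝ} (hV : Measurable V) {C : Set 𝓧} (hPQ : EqOn Q P Cᶜ)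
    {D c : ℝ} (hD : 0 ≤ D) (hc : 0 ≤ c) (hVC : ∀ x ∈ C, V x ≤ D)
    (hQ : ∀ x, ∫⁻ y, ENNReal.ofReal (V y) ∂Q x
      ≤ ENNReal.ofReal (V x + C.indicator (fun _ => c) x)) (n : ℕ) (x : 𝓧) :
    ∫⁻ y, ENNReal.ofReal (V y) ∂kpow Q n x
      ≤ ∫⁻ y, ENNReal.ofReal (V y) ∂kpow P n x + ENNReal.ofReal (D + n * c) := by
  rw [ofReal_add hD (by positivity), ofReal_mul n.cast_nonneg, ofReal_natCast]
  refine lintegral_kpow_le_of_eqOn_compl P Q hPQ hV.ennreal_ofReal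
    (fun x hx => ofReal_le_ofReal (hVC x hx)) (fun x => (hQ x).trans ?_) n x
  exact ofReal_add_le.trans (by gcongr; exact indicator_le_self' (fun _ _ => hc) x)

end Drift

section Asymptotics

open Filter Asymptotics

lemma isLittleO_rpow_id_atTop {δ : ℝ} (hδ : δ < 1) : (fun v : ℝ => v ^ δ) =o[atTop] id := by
  refine (isLittleO_iff_tendsto' ((eventually_gt_atTop 0).mono fun v hv h => ?_)).2 ?_
  · exact absurd h hv.ne'
  · refine (tendsto_rpow_neg_atTop (sub_pos.2 hδ)).congr'
      ((eventually_gt_atTop 0).mono fun v hv => ?_)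
    simp only [id, neg_sub, Real.rpow_sub hv, Real.rpow_one]

lemma eventually_const_add_mul_rpow_le {δ : ℝ} (hδ : δ < 1) (A B : ℝ) {ε : ℝ} (hε : 0 < ε) :
    ∀ᶠ v in atTop, A + B * v ^ δ ≤ ε * v := by
  have h := ((isLittleO_const_id_atTop A).add
    ((isLittleO_rpow_id_atTop hδ).const_mul_left B)).bound hε
  filter_upwards [h, eventually_ge_atTop 0] with v hv hv0
  simpa [Real.norm_eq_abs, abs_of_nonneg hv0] using (le_abs_self _).trans hv

lemma eventually_const_add_ceil_mul_le {δ : ℝ} (hδ : δ < 1) (A : ℝ) {lam b ε : ℝ}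
    (hlam : 0 ≤ lam) (hb : 0 ≤ b) (hε : 0 < ε) :
    ∀ᶠ v in atTop, A + ⌈lam * v ^ δ⌉₊ * b ≤ ε * v := by
  filter_upwards [eventually_const_add_mul_rpow_le hδ (A + b) (lam * b) hε,
    eventually_ge_atTop 0] with v hv hv0
  have hceil : (⌈lam * v ^ δ⌉₊ : ℝ) ≤ lam * v ^ δ + 1 :=
    (Nat.ceil_lt_add_one (by positivity)).le
  nlinarith [mul_le_mul_of_nonneg_right hceil hb]

end Asymptotics

theorem stmt_9 {𝓧 : Type*} [MeasurableSpace 𝓧]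
    (P : ProbabilityTheory.Kernel 𝓧 𝓧) [ProbabilityTheory.IsMarkovKernel P]
    (V : 𝓧 → ℝ) (hVmeas : Measurable V)
    (d : ℝ) (C : Set 𝓧) (hCdef : C = {x | V x ≤ d})
    (d' lam δ β b' : ℝ) (hd' : d ≤ d') (hd'1 : 1 ≤ d') (hlam : 0 < lam)
    (hδ : δ ∈ Set.Ico (0 : ℝ) 1) (hβ : β ∈ Set.Ioo (0 : ℝ) 1)
    (hsub : ∀ x, ∫⁻ y, ENNReal.ofReal (V y) ∂((kpow P (tamingF lam δ d' (V x))) x)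
      ≤ ENNReal.ofReal (β * V x + Set.indicator {x' | V x' ≤ d'} (fun _ => b') x))
    (Phat : ProbabilityTheory.Kernel 𝓧 𝓧) [ProbabilityTheory.IsMarkovKernel Phat]
    (hagree : ∀ x ∉ C, Phat x = P x)
    (bhat : ℝ) (hbhat : 0 ≤ bhat)
    (hweakhat : ∀ x, ∫⁻ y, ENNReal.ofReal (V y) ∂(Phat x)
      ≤ ENNReal.ofReal (V x + C.indicator (fun _ => bhat) x)) :
    ∀ βhat ∈ Set.Ioo β 1,
      (∃ dhat : ℝ, d' ≤ dhat ∧ ∃ bhat' : ℝ,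
        ∀ x, ∫⁻ y, ENNReal.ofReal (V y)
            ∂((kpow Phat (tamingF lam δ dhat (V x))) x)
          ≤ ENNReal.ofReal (βhat * V x
              + Set.indicator {x' | V x' ≤ dhat} (fun _ => bhat') x)) ∧
      ((∀ r : ℝ, IsSmallSet Phat {x | V x ≤ r}) → Real.log βhat < tameBound δ →
        IsTame Phat V) := by
  rintro βhat ⟨hββ, hβhat1⟩
  subst hCdef
  have hcomp := lintegral_ofReal_kpow_le_of_eqOn_compl P Phat hVmeas hagree
    (zero_le_one.trans hd'1) hbhat (fun x hx => le_trans hx hd') hweakhat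
  obtain ⟨R, hR⟩ := Filter.eventually_atTop.1 <|
    eventually_const_add_ceil_mul_le hδ.2 d' hlam.le hbhat (sub_pos.2 hββ)
  set dhat := max d' R
  have htamed (x : 𝓧) : ∫⁻ y, ENNReal.ofReal (V y) ∂kpow Phat (tamingF lam δ dhat (V x)) x
      ≤ ENNReal.ofReal (βhat * V x + {x' | V x' ≤ dhat}.indicator (fun _ => dhat + bhat) x) := by
    rcases le_or_gt (V x) dhat with hx | hx
    · rw [tamingF_of_le hx, kpow_one, indicator_of_mem (show x ∈ {x' | V x' ≤ dhat} from hx)]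
      refine (hweakhat x).trans (ofReal_le_ofReal ?_)
      have hind := indicator_le_self' (s := {x | V x ≤ d}) (fun _ _ => hbhat) x
      nlinarith [mul_nonneg (sub_nonneg.2 hβhat1.le) (sub_nonneg.2 hx),
        mul_nonneg (hβ.1.trans hββ).le (zero_le_one.trans (hd'1.trans (le_max_left d' R)))]
    · have hx' : d' < V x := (le_max_left _ _).trans_lt hx
      have hPx := hsub x
      rw [tamingF_of_lt hx', indicator_of_notMem (show x ∉ {x' | V x' ≤ d'} from hx'.not_ge),
        add_zero] at hPx
      rw [tamingF_of_lt hx, indicator_of_notMem (show x ∉ {x' | V x' ≤ dhat} from hx.not_ge),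
        add_zero]
      have hβV : 0 ≤ β * V x := mul_nonneg hβ.1.le (by linarith)
      calc _ ≤ _ := hcomp _ x
        _ ≤ ENNReal.ofReal (β * V x) + ENNReal.ofReal (d' + ⌈lam * V x ^ δ⌉₊ * bhat) := by
            gcongr
        _ = ENNReal.ofReal (β * V x + (d' + ⌈lam * V x ^ δ⌉₊ * bhat)) :=
            (ofReal_add hβV (by positivity)).symm
        _ ≤ ENNReal.ofReal (βhat * V x) :=
            ofReal_le_ofReal (by linarith [hR (V x) ((le_max_right _ _).trans hx.le)])
  exact ⟨⟨dhat, le_max_left _ _, _, htamed⟩, fun hsmall hlog => ⟨dhat,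
    hd'1.trans (le_max_left _ _), hsmall dhat, lam, hlam, δ, hδ, βhat,
    ⟨hβ.1.trans hββ, hβhat1⟩, _, hlog, htamed⟩⟩
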